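/- arXiv:1501.01360 — 2 statements merged into one kernel-verified Lean document; each statement's English description precedes it below -/
import Mathlib

section
/- For words c and c' in Z4^r × Z4^s, and T the simultaneous cyclic shift operator on both blocks, the inner product satisfies c' · T^{lcm(r,s)-1}(c) = c · T(c'). Consequently, if c' is orthogonal to every element of a double cyclic code C, then T(c') is also orthogonal to every element of C. -/
open Polynomial

abbrev Z4 := ZMod 4

abbrev Rq (n : ℕ) := Polynomial Z4 ⧸ Ideal.span ({(X : Polynomial Z4) ^ n - 1} : Set (Polynomial Z4))

noncomputable def mkQ (n : ℕ) (p : Polynomial Z4) : Rq n := Ideal.Quotient.mk _ p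

noncomputable def toPoly {n : ℕ} (c : Fin n → Z4) : Polynomial Z4 :=
  ∑ i, Polynomial.C (c i) * X ^ (i : ℕ)

noncomputable def tau {r s : ℕ} (c : (Fin r → Z4) × (Fin s → Z4)) : Rq r × Rq s :=
  (mkQ r (toPoly c.1), mkQ s (toPoly c.2))

def shiftT {r s : ℕ} (c : (Fin r → Z4) × (Fin s → Z4)) : (Fin r → Z4) × (Fin s → Z4) :=
  (fun i => c.1 ((finRotate r).symm i), fun j => c.2 ((finRotate s).symm j))

def innerProd {r s : ℕ} (c c' : (Fin r → Z4) × (Fin s → Z4)) : Z4 :=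
  ∑ i, c.1 i * c'.1 i + ∑ j, c.2 j * c'.2 j

/-! Since `T` permutes coordinates it preserves the inner product, and `T^{lcm(r,s)} = id`; hence
`c' · T^{L-1} c = T c' · T^L c = T c' · c`. The second claim follows by applying this to
`T^{L-1} c ∈ C`. -/

open scoped Fin.NatCast in
lemma finRotate_succ_pow_apply (n k : ℕ) (i : Fin (n + 1)) :
    (finRotate (n + 1) ^ k) i = i + (k : Fin (n + 1)) := by
  induction k with
  | zero => simp
  | succ k ih => rw [pow_succ', Equiv.Perm.mul_apply, ih, finRotate_apply, Nat.cast_succ, add_assoc]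

lemma finRotate_pow_self (n : ℕ) : finRotate n ^ n = 1 := by
  cases n with
  | zero => rfl
  | succ n => ext i; simp [finRotate_succ_pow_apply]

lemma finRotate_pow_eq_one_of_dvd {n k : ℕ} (h : n ∣ k) : finRotate n ^ k = 1 := by
  obtain ⟨m, rfl⟩ := h
  rw [pow_mul, finRotate_pow_self, one_pow]

section Shift

variable {r s : ℕ}

lemma innerProd_comm (c c' : (Fin r → Z4) × (Fin s → Z4)) :
    innerProd c c' = innerProd c' c := by
  simp only [innerProd, mul_comm]

lemma innerProd_shiftT_shiftT (c c' : (Fin r → Z4) × (Fin s → Z4)) :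
    innerProd (shiftT c) (shiftT c') = innerProd c c' := by
  simp only [innerProd, shiftT]
  rw [Equiv.sum_comp (finRotate r).symm (fun i => c.1 i * c'.1 i),
    Equiv.sum_comp (finRotate s).symm (fun j => c.2 j * c'.2 j)]

lemma shiftT_iterate (k : ℕ) (c : (Fin r → Z4) × (Fin s → Z4)) :
    shiftT^[k] c =
      (fun i => c.1 ((finRotate r ^ k).symm i), fun j => c.2 ((finRotate s ^ k).symm j)) := by
  induction k with
  | zero => rfl
  | succ k ih =>
    rw [Function.iterate_succ_apply', ih]
    simp only [shiftT, pow_succ', Equiv.Perm.mul_def, Equiv.symm_trans_apply]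

lemma shiftT_iterate_lcm (c : (Fin r → Z4) × (Fin s → Z4)) :
    shiftT^[Nat.lcm r s] c = c := by
  rw [shiftT_iterate, finRotate_pow_eq_one_of_dvd (Nat.dvd_lcm_left r s),
    finRotate_pow_eq_one_of_dvd (Nat.dvd_lcm_right r s)]
  rfl

end Shift

/-- `c' · T^{lcm(r,s)-1}(c) = c · T(c')`, and consequently the orthogonal
complement of a double cyclic code is closed under the shift `T`. -/
theorem stmt_1 (r s : ℕ) (hr : 0 < r) (hs : 0 < s) :
    (∀ c c' : (Fin r → Z4) × (Fin s → Z4),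
        innerProd c' (shiftT^[Nat.lcm r s - 1] c) = innerProd c (shiftT c')) ∧
    (∀ C : Submodule Z4 ((Fin r → Z4) × (Fin s → Z4)),
      (∀ c ∈ C, shiftT c ∈ C) →
      ∀ c' : (Fin r → Z4) × (Fin s → Z4),
        (∀ c ∈ C, innerProd c c' = 0) → (∀ c ∈ C, innerProd c (shiftT c') = 0)) := by
  have hL : Nat.lcm r s - 1 + 1 = Nat.lcm r s := Nat.sub_add_cancel (Nat.lcm_pos hr hs)
  have adjoint : ∀ c c' : (Fin r → Z4) × (Fin s → Z4),
      innerProd c' (shiftT^[Nat.lcm r s - 1] c) = innerProd c (shiftT c') := fun c c' => by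
    rw [← innerProd_shiftT_shiftT, ← Function.iterate_succ_apply' shiftT, Nat.succ_eq_add_one,
      hL, shiftT_iterate_lcm, innerProd_comm]
  refine ⟨adjoint, fun C hC c' hperp c hc => ?_⟩
  rw [← adjoint, innerProd_comm]
  exact hperp _ ((show Set.MapsTo shiftT (C : Set _) C from fun x hx => hC x hx).iterate _ hc)
end

section
/- Let C be the double cyclic code of length (1,7) over Z4 generated by the single element (1 | 3x^3+2x^2+3x+1) in Z4[x]/(x−1) × Z4[x]/(x^7−1). Then C has exactly 4^4 = 256 codewords, its minimum Lee weight is 6, and its Gray image is a (possibly nonlinear) binary (16, 2^8, 6) code. -/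
open Polynomial

/-- Lee weight of an element of `Z4`: `0,1,2,3 ↦ 0,1,2,1`. -/
def leeWt (a : Z4) : ℕ := min a.val (4 - a.val)

/-- Lee weight of a word of `Z4^r × Z4^s`. -/
def leeWeight {r s : ℕ} (c : (Fin r → Z4) × (Fin s → Z4)) : ℕ :=
  ∑ i, leeWt (c.1 i) + ∑ j, leeWt (c.2 j)

/-- The Gray map `0 ↦ (0,0)`, `1 ↦ (0,1)`, `2 ↦ (1,1)`, `3 ↦ (1,0)`. -/
def gray (a : Z4) : ZMod 2 × ZMod 2 :=
  if a = 0 then (0, 0) else if a = 1 then (0, 1) else if a = 2 then (1, 1) else (1, 0)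

/-- The Gray map applied coordinatewise to a word. -/
def grayWord {r s : ℕ} (c : (Fin r → Z4) × (Fin s → Z4)) :
    (Fin r → ZMod 2 × ZMod 2) × (Fin s → ZMod 2 × ZMod 2) :=
  (fun i => gray (c.1 i), fun j => gray (c.2 j))

/-- Hamming distance between two pairs of bits. -/
def bitPairDist (p q : ZMod 2 × ZMod 2) : ℕ :=
  (if p.1 = q.1 then 0 else 1) + (if p.2 = q.2 then 0 else 1)

/-- Hamming distance between binary images (words of `2r + 2s` bits). -/
def hamDist {r s : ℕ} (u w : (Fin r → ZMod 2 × ZMod 2) × (Fin s → ZMod 2 × ZMod 2)) : ℕ :=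
  ∑ i, bitPairDist (u.1 i) (w.1 i) + ∑ j, bitPairDist (u.2 j) (w.2 j)

/-! Pulling back along the injective coefficient map `tau`, the `Z4[X]`-span of `tau g` is the
`Z4`-span of all cyclic shifts of `g`. For `g = (1 | 1 + 3x + 2x² + 3x³)` the fourth shift is
`3g + 3xg + x²g + 2x³g`, so the code is the image of `b ↦ Σ bᵢ xⁱ g` on `Z4⁴`. A finite check shows
that every nonzero `b` gives Lee weight at least `6`, so this map is injective and the code has
`4⁴` words. The Gray map is injective and turns Hamming distance into the Lee weight of the
difference, and in a linear code the Lee distances are exactly the Lee weights. -/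

abbrev Word (r s : ℕ) := (Fin r → Z4) × (Fin s → Z4)

lemma iterate_mem_span_range_iterate {R M : Type*} [Semiring R] [AddCommMonoid M] [Module R M]
    (f : M →ₗ[R] M) (v : M) {m : ℕ}
    (h : f^[m] v ∈ Submodule.span R (Set.range fun i : Fin m => f^[i] v)) (k : ℕ) :
    f^[k] v ∈ Submodule.span R (Set.range fun i : Fin m => f^[i] v) := by
  set S := Submodule.span R (Set.range fun i : Fin m => f^[i] v)
  have hS : S.map f ≤ S := by
    refine (Submodule.map_span_le _ _ _).2 ?_
    rintro _ ⟨i, rfl⟩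
    rw [← Function.iterate_succ_apply' f]
    rcases (show (i : ℕ) + 1 ≤ m from i.isLt).lt_or_eq with hi | hi
    · exact Submodule.subset_span ⟨⟨i + 1, hi⟩, rfl⟩
    · rwa [show (i : ℕ).succ = m from hi]
  induction k with
  | zero =>
    rcases Nat.eq_zero_or_pos m with rfl | hm
    · exact h
    · exact Submodule.subset_span ⟨⟨0, hm⟩, rfl⟩
  | succ k ih => exact Function.iterate_succ_apply' f k v ▸ hS ⟨_, ih, rfl⟩

instance : Fact (1 < 4) := ⟨by norm_num⟩

lemma coeff_toPoly {n : ℕ} (c : Fin n → Z4) (i : Fin n) : (toPoly c).coeff i = c i := by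
  simp [toPoly, coeff_C_mul, coeff_X_pow, Fin.val_eq_val]

lemma toPoly_injective (n : ℕ) : Function.Injective (toPoly (n := n)) := fun c c' h =>
  funext fun i => by rw [← coeff_toPoly c i, ← coeff_toPoly c' i, h]

lemma toPoly_add {n : ℕ} (c c' : Fin n → Z4) : toPoly (c + c') = toPoly c + toPoly c' := by
  simp [toPoly, add_mul, Finset.sum_add_distrib]

lemma toPoly_smul {n : ℕ} (z : Z4) (c : Fin n → Z4) : toPoly (z • c) = C z * toPoly c := by
  simp [toPoly, Finset.mul_sum, mul_assoc]

lemma mkQ_toPoly_injective (n : ℕ) : Function.Injective fun c : Fin n → Z4 => mkQ n (toPoly c) := by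
  intro c c' h
  rcases Nat.eq_zero_or_pos n with rfl | hn
  · exact Subsingleton.elim c c'
  have hmonic : ((X : Z4[X]) ^ n - 1).Monic := by
    simpa using monic_X_pow_sub_C (1 : Z4) hn.ne'
  have hdeg : (toPoly c - toPoly c').degree < ((X : Z4[X]) ^ n - 1).degree := by
    rw [← C_1, degree_X_pow_sub_C hn]
    exact (degree_sub_le _ _).trans_lt (max_lt (degree_sum_fin_lt _) (degree_sum_fin_lt _))
  have hdvd : (X : Z4[X]) ^ n - 1 ∣ toPoly c - toPoly c' := by
    rwa [Ideal.mem_span_singleton.symm, ← Ideal.Quotient.eq]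
  by_contra hne
  exact hmonic.not_dvd_of_degree_lt (sub_ne_zero.2 (mt (toPoly_injective n ·) hne)) hdeg hdvd

lemma mkQ_toPoly_rotate (n : ℕ) (c : Fin n → Z4) :
    mkQ n (toPoly fun i => c ((finRotate n).symm i)) = mkQ n (X * toPoly c) := by
  rcases n with _ | m
  · simp [toPoly]
  have h0 : (finRotate (m + 1)).symm 0 = Fin.last m := by
    rw [Equiv.symm_apply_eq, finRotate_last]
  have hsucc (j : Fin m) : (finRotate (m + 1)).symm j.succ = j.castSucc := by
    rw [Equiv.symm_apply_eq, finRotate_apply, Fin.coeSucc_eq_succ]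
  have hrot : toPoly (fun i => c ((finRotate (m + 1)).symm i)) =
      C (c (Fin.last m)) + ∑ j : Fin m, C (c j.castSucc) * X ^ ((j : ℕ) + 1) := by
    simp only [toPoly, Fin.sum_univ_succ, h0, hsucc, Fin.val_zero, pow_zero, mul_one, Fin.val_succ]
  have hmul : X * toPoly c =
      ∑ j : Fin m, C (c j.castSucc) * X ^ ((j : ℕ) + 1) + C (c (Fin.last m)) * X ^ (m + 1) := by
    rw [toPoly, Fin.sum_univ_castSucc, mul_add, Finset.mul_sum, Fin.val_last]
    congr 1
    · exact Finset.sum_congr rfl fun j _ => by rw [Fin.val_castSucc]; ring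
    · ring
  rw [mkQ, mkQ, Ideal.Quotient.eq, Ideal.mem_span_singleton, hrot, hmul]
  exact ⟨-C (c (Fin.last m)), by ring⟩

section DoubleCyclic

variable {r s : ℕ}

lemma tau_injective : Function.Injective (tau (r := r) (s := s)) := fun _ _ h =>
  Prod.ext (mkQ_toPoly_injective r congr(($h).1)) (mkQ_toPoly_injective s congr(($h).2))

lemma tau_zero : tau (0 : Word r s) = 0 := by
  simp [tau, toPoly, mkQ]

lemma tau_add (c c' : Word r s) : tau (c + c') = tau c + tau c' := by
  simp only [tau, Prod.fst_add, Prod.snd_add, toPoly_add, mkQ, map_add, Prod.mk_add_mk]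

lemma mkQ_mul (n : ℕ) (p q : Z4[X]) : mkQ n (p * q) = p • mkQ n q :=
  rfl

lemma tau_smul (z : Z4) (c : Word r s) : tau (z • c) = C z • tau c := by
  simp only [tau, Prod.smul_fst, Prod.smul_snd, toPoly_smul, mkQ_mul, Prod.smul_mk]

lemma tau_shiftT (c : Word r s) : tau (shiftT c) = (X : Z4[X]) • tau c := by
  simp only [tau, shiftT, mkQ_toPoly_rotate, mkQ_mul, Prod.smul_mk]

lemma tau_iterate_shiftT (k : ℕ) (c : Word r s) :
    tau (shiftT^[k] c) = (X : Z4[X]) ^ k • tau c := by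
  induction k with
  | zero => simp
  | succ k ih => rw [Function.iterate_succ_apply', tau_shiftT, ih, pow_succ', mul_smul]

def shiftTₗ : Word r s →ₗ[Z4] Word r s where
  toFun := shiftT
  map_add' _ _ := rfl
  map_smul' _ _ := rfl

theorem tau_mem_span_singleton_iff (g c : Word r s) :
    tau c ∈ Submodule.span Z4[X] {tau g} ↔
      c ∈ Submodule.span Z4 (Set.range fun k : ℕ => shiftT^[k] g) := by
  set S := Submodule.span Z4 (Set.range fun k : ℕ => shiftT^[k] g)
  constructor
  · intro h
    obtain ⟨p, hp⟩ := Submodule.mem_span_singleton.1 h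
    suffices ∀ p : Z4[X], ∃ d ∈ S, p • tau g = tau d by
      obtain ⟨d, hd, hpd⟩ := this p
      exact tau_injective (hp ▸ hpd) ▸ hd
    intro p
    induction p using Polynomial.induction_on' with
    | add p q hp hq =>
      obtain ⟨d, hd, hpd⟩ := hp
      obtain ⟨d', hd', hqd'⟩ := hq
      exact ⟨d + d', S.add_mem hd hd', by rw [add_smul, hpd, hqd', tau_add]⟩
    | monomial k z =>
      refine ⟨z • shiftT^[k] g, S.smul_mem z (Submodule.subset_span ⟨k, rfl⟩), ?_⟩
      rw [← C_mul_X_pow_eq_monomial, mul_smul, ← tau_iterate_shiftT, tau_smul]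
  · intro h
    induction h using Submodule.span_induction with
    | mem x hx =>
      obtain ⟨k, rfl⟩ := hx
      rw [tau_iterate_shiftT]
      exact Submodule.smul_mem _ _ (Submodule.mem_span_singleton_self _)
    | zero => rw [tau_zero]; exact Submodule.zero_mem _
    | add x y _ _ hx hy => rw [tau_add]; exact Submodule.add_mem _ hx hy
    | smul z x _ hx => rw [tau_smul]; exact Submodule.smul_mem _ _ hx

end DoubleCyclic

lemma gray_injective : Function.Injective gray := by decide

lemma bitPairDist_gray (a b : Z4) : bitPairDist (gray a) (gray b) = leeWt (a - b) := by
  revert a b; decide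

section Gray

variable {r s : ℕ}

lemma leeWeight_zero : leeWeight (0 : Word r s) = 0 := by
  simp [leeWeight, leeWt]

lemma grayWord_injective : Function.Injective (grayWord (r := r) (s := s)) := fun _ _ h =>
  Prod.ext (funext fun i => gray_injective congr(($h).1 i))
    (funext fun j => gray_injective congr(($h).2 j))

lemma hamDist_grayWord (u w : Word r s) :
    hamDist (grayWord u) (grayWord w) = leeWeight (u - w) := by
  simp only [hamDist, grayWord, leeWeight, bitPairDist_gray, Prod.fst_sub, Prod.snd_sub,
    Pi.sub_apply]

lemma setOf_hamDist_grayWord_image (C : Set (Word r s)) :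
    {n | ∃ u ∈ grayWord '' C, ∃ w ∈ grayWord '' C, u ≠ w ∧ hamDist u w = n} =
      {n | ∃ u ∈ C, ∃ w ∈ C, u ≠ w ∧ leeWeight (u - w) = n} := by
  ext n
  simp only [Set.mem_ofPred_eq, Set.exists_mem_image, grayWord_injective.ne_iff, hamDist_grayWord]

lemma setOf_leeWeight_sub (K : AddSubgroup (Word r s)) :
    {n | ∃ u ∈ (K : Set (Word r s)), ∃ w ∈ (K : Set (Word r s)), u ≠ w ∧ leeWeight (u - w) = n} =
      {n | ∃ c ∈ (K : Set (Word r s)), c ≠ 0 ∧ leeWeight c = n} := by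
  ext n
  constructor
  · rintro ⟨u, hu, w, hw, hne, rfl⟩
    exact ⟨u - w, K.sub_mem hu hw, sub_ne_zero.2 hne, rfl⟩
  · rintro ⟨c, hc, hne, rfl⟩
    exact ⟨c, hc, 0, K.zero_mem, hne, by rw [sub_zero]⟩

end Gray

def kerdockGen : Word 1 7 := (![1], ![1, 3, 2, 3, 0, 0, 0])

def kerdockEncode : (Fin 4 → Z4) →ₗ[Z4] Word 1 7 :=
  Fintype.linearCombination Z4 fun i : Fin 4 => shiftT^[i] kerdockGen

lemma kerdockEncode_apply (b : Fin 4 → Z4) :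
    kerdockEncode b = ∑ i : Fin 4, b i • shiftT^[i] kerdockGen := rfl

lemma iterate_four_shiftT_kerdockGen :
    shiftT^[4] kerdockGen = kerdockEncode ![3, 3, 1, 2] := by
  rw [kerdockEncode_apply]; decide

set_option maxRecDepth 40000 in
lemma six_le_leeWeight_kerdockEncode :
    ∀ b : Fin 4 → Z4, b ≠ 0 → 6 ≤ leeWeight (kerdockEncode b) := by
  simp only [kerdockEncode_apply]; decide

lemma leeWeight_kerdockEncode :
    leeWeight (kerdockEncode ![0, 0, 1, 3]) = 6 := by
  rw [kerdockEncode_apply]; decide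

lemma tau_kerdockGen :
    tau kerdockGen = (mkQ 1 1, mkQ 7 (3 * X ^ 3 + 2 * X ^ 2 + 3 * X + 1)) := by
  have h1 : toPoly kerdockGen.1 = 1 := by simp [kerdockGen, toPoly]
  have h7 : toPoly kerdockGen.2 = 3 * X ^ 3 + 2 * X ^ 2 + 3 * X + 1 := by
    simp only [toPoly, kerdockGen, Fin.sum_univ_succ, Fin.isValue, Matrix.cons_val_zero, map_one,
      Fin.coe_ofNat_eq_mod, Nat.zero_mod, pow_zero, mul_one, Matrix.cons_val_succ, Fin.val_succ,
      map_ofNat, zero_add, pow_one, Nat.reduceAdd, map_zero, zero_mul, Finset.univ_unique,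
      Fin.default_eq_zero, Matrix.cons_val_fin_one, Fin.val_eq_zero, Finset.sum_const_zero,
      add_zero]
    ring
  rw [tau, h1, h7]

theorem tau_mem_span_kerdockGen_iff (c : Word 1 7) :
    tau c ∈ Submodule.span Z4[X] {tau kerdockGen} ↔ c ∈ LinearMap.range kerdockEncode := by
  rw [tau_mem_span_singleton_iff, kerdockEncode, Fintype.range_linearCombination]
  constructor
  · refine fun h => Submodule.span_le.2 ?_ h
    rintro _ ⟨k, rfl⟩
    refine iterate_mem_span_range_iterate shiftTₗ kerdockGen ?_ k
    change shiftT^[4] kerdockGen ∈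
      Submodule.span Z4 (Set.range fun i : Fin 4 => shiftT^[i] kerdockGen)
    rw [← Fintype.range_linearCombination, iterate_four_shiftT_kerdockGen]
    exact LinearMap.mem_range_self kerdockEncode _
  · exact fun h => Submodule.span_mono (Set.range_comp_subset_range Fin.val _) h

lemma kerdockEncode_injective : Function.Injective kerdockEncode := by
  refine (injective_iff_map_eq_zero _).2 fun b hb => ?_
  by_contra hne
  simpa [hb, leeWeight_zero] using six_le_leeWeight_kerdockEncode b hne

lemma isLeast_leeWeight_kerdock :
    IsLeast {w | ∃ c ∈ (LinearMap.range kerdockEncode : Set (Word 1 7)), c ≠ 0 ∧ leeWeight c = w}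
      6 := by
  refine ⟨⟨_, LinearMap.mem_range_self _ ![0, 0, 1, 3], ?_, leeWeight_kerdockEncode⟩, ?_⟩
  · intro h
    simpa [h, leeWeight_zero] using leeWeight_kerdockEncode
  · rintro _ ⟨_, ⟨b, rfl⟩, hne, rfl⟩
    exact six_le_leeWeight_kerdockEncode b (by rintro rfl; exact hne (map_zero _))

/-- the double cyclic code of length `(1,7)` over `Z4` generated by
`(1 | 3x^3+2x^2+3x+1)` has `4^4 = 256` codewords, minimum Lee weight `6`, and its Gray
image is a binary `(16, 2^8, 6)` code (a set of `16`-bit words with `2^8` elements and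
minimum Hamming distance `6`). -/
theorem stmt_18
    (C : Set ((Fin 1 → Z4) × (Fin 7 → Z4)))
    (hC : ∀ c, c ∈ C ↔ tau c ∈ Submodule.span (Polynomial Z4)
        {((mkQ 1 1, mkQ 7 (3 * X ^ 3 + 2 * X ^ 2 + 3 * X + 1)) : Rq 1 × Rq 7)}) :
    Nat.card C = 256 ∧
    IsLeast {w : ℕ | ∃ c ∈ C, c ≠ 0 ∧ leeWeight c = w} 6 ∧
    Nat.card (grayWord '' C) = 2 ^ 8 ∧
    IsLeast {n : ℕ | ∃ u ∈ grayWord '' C, ∃ w ∈ grayWord '' C, u ≠ w ∧ hamDist u w = n} 6 := by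
  have hCK : C = (LinearMap.range kerdockEncode : Set (Word 1 7)) := by
    ext c
    rw [hC, ← tau_kerdockGen]
    exact tau_mem_span_kerdockGen_iff c
  subst hCK
  have hcard : Nat.card (LinearMap.range kerdockEncode : Set (Word 1 7)) = 256 := by
    rw [LinearMap.coe_range, Nat.card_range_of_injective kerdockEncode_injective]
    simp
  refine ⟨hcard, isLeast_leeWeight_kerdock, ?_, ?_⟩
  · rw [Nat.card_image_of_injective grayWord_injective, hcard]
    rfl
  · have hK := setOf_leeWeight_sub (LinearMap.range kerdockEncode).toAddSubgroup
    rw [Submodule.coe_toAddSubgroup] at hK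
    rw [setOf_hamDist_grayWord_image, hK]
    exact isLeast_leeWeight_kerdock
end
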